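/- Let α ∈ (0,1), T > 0, and let f : [0,T] → ℝ be continuously differentiable. Then for every t ∈ [0,T], the AB fractional integral of the ABC fractional derivative of f recovers f up to its initial value: (^{AB}I^α (^{ABC}D^α_t f))(t) = f(t) − f(0). -/

import Mathlib

open intervalIntegral

/-- The two-parameter Mittag-Leffler function `E_{α,β}(x) = ∑ₖ xᵏ / Γ(αk + β)`. -/
noncomputable def mittagLeffler (α β x : ℝ) : ℝ :=
  ∑' k : ℕ, x ^ k / Real.Gamma (α * k + β)

/-- The normalization constant `B(α) = (1 - α) + α / Γ(α)`. -/
noncomputable def Bnorm (α : ℝ) : ℝ := (1 - α) + α / Real.Gamma α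

/-- The Atangana–Baleanu–Caputo fractional derivative of order `α` with base point `0`:
`(^{ABC}D^α_t f)(t) = (B(α)/(1-α)) ∫₀ᵗ f'(y) E_α(-γ (t-y)^α) dy` with `γ = α/(1-α)`. -/
noncomputable def ABCderiv (α : ℝ) (f : ℝ → ℝ) (t : ℝ) : ℝ :=
  Bnorm α / (1 - α) *
    ∫ y in (0 : ℝ)..t, deriv f y * mittagLeffler α 1 (-(α / (1 - α)) * (t - y) ^ α)

/-- The AB fractional integral of order `α` with base point `0`:
`(^{AB}I^α g)(t) = ((1-α)/B(α)) g(t) + (α/(B(α)Γ(α))) ∫₀ᵗ g(s) (t-s)^{α-1} ds`. -/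
noncomputable def ABint (α : ℝ) (g : ℝ → ℝ) (t : ℝ) : ℝ :=
  (1 - α) / Bnorm α * g t +
    α / (Bnorm α * Real.Gamma α) * ∫ s in (0 : ℝ)..t, g s * (t - s) ^ (α - 1)

open Set MeasureTheory Filter Topology intervalIntegral

lemma gamma_slope {α y : ℝ} (hα : 0 < α) (hα1 : α < 1) (hy : 2 ≤ y) :
    Real.Gamma y * (y - 1) ^ α ≤ Real.Gamma (y + α) := by
  have h0 : (0:ℝ) < y - 1 := by linarith
  have hyp : (0:ℝ) < y := by linarith
  have hmem1 : y - 1 ∈ Ioi (0:ℝ) := h0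
  have hmem3 : y + α ∈ Ioi (0:ℝ) := by simp only [mem_Ioi]; linarith
  have hsl := Real.convexOn_log_Gamma.slope_mono_adjacent hmem1 hmem3
      (by linarith : y - 1 < y) (by linarith : y < y + α)
  simp only [Function.comp] at hsl
  have hGy : Real.Gamma y = (y - 1) * Real.Gamma (y - 1) := by
    have := Real.Gamma_add_one (ne_of_gt h0)
    rwa [sub_add_cancel] at this
  have hΓ1 : (0:ℝ) < Real.Gamma (y - 1) := Real.Gamma_pos_of_pos h0
  have hΓy : (0:ℝ) < Real.Gamma y := Real.Gamma_pos_of_pos hyp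
  have hΓa : (0:ℝ) < Real.Gamma (y + α) := Real.Gamma_pos_of_pos (by linarith)
  have hlog : Real.log (Real.Gamma y) - Real.log (Real.Gamma (y-1)) = Real.log (y-1) := by
    rw [hGy, Real.log_mul (ne_of_gt h0) (ne_of_gt hΓ1)]; ring
  rw [show y - (y - 1) = 1 by ring, show y + α - y = α by ring, div_one, hlog] at hsl
  have h2 : Real.log (y-1) * α + Real.log (Real.Gamma y) ≤ Real.log (Real.Gamma (y + α)) := by
    rw [le_div_iff₀ hα] at hsl; linarith
  calc Real.Gamma y * (y - 1) ^ α
      = Real.exp (Real.log (y-1) * α + Real.log (Real.Gamma y)) := by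
        rw [Real.exp_add, Real.exp_log hΓy, ← Real.rpow_def_of_pos h0]; ring
    _ ≤ Real.exp (Real.log (Real.Gamma (y + α))) := Real.exp_le_exp.2 h2
    _ = Real.Gamma (y + α) := Real.exp_log hΓa

lemma ml_summable {α : ℝ} (hα : 0 < α) (hα1 : α < 1) (x : ℝ) :
    Summable (fun k : ℕ => x ^ k / Real.Gamma (α * k + 1)) := by
  apply summable_of_ratio_norm_eventually_le (r := 1/2) (by norm_num)
  have h1 : Tendsto (fun k : ℕ => α * k) atTop atTop :=
    Tendsto.const_mul_atTop hα tendsto_natCast_atTop_atTop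
  have h2 : Tendsto (fun k : ℕ => (α * k) ^ α) atTop atTop :=
    (tendsto_rpow_atTop hα).comp h1
  filter_upwards [h1.eventually_ge_atTop 1, h2.eventually_ge_atTop (2 * |x|)] with k hk1 hk2
  have hΓy : (0:ℝ) < Real.Gamma (α * k + 1) := Real.Gamma_pos_of_pos (by positivity)
  have hkpos : (0:ℝ) < α * k := by linarith
  have hA : (0:ℝ) < (α * k) ^ α := Real.rpow_pos_of_pos hkpos α
  have hΓb : (0:ℝ) < Real.Gamma (α * (k+1 : ℕ) + 1) := by
    apply Real.Gamma_pos_of_pos; push_cast; nlinarith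
  have hkey : Real.Gamma (α * k + 1) * (α * k) ^ α ≤ Real.Gamma (α * (k+1 : ℕ) + 1) := by
    have := gamma_slope hα hα1 (by linarith : 2 ≤ α * (k:ℝ) + 1)
    rw [show α * (k:ℝ) + 1 - 1 = α * k by ring] at this
    have harg : α * ((k+1 : ℕ) : ℝ) + 1 = α * (k:ℝ) + 1 + α := by push_cast; ring
    rw [harg]; exact this
  rw [Real.norm_eq_abs, Real.norm_eq_abs, abs_div, abs_div, abs_pow, abs_pow,
    abs_of_pos hΓy, abs_of_pos hΓb]
  calc |x| ^ (k+1) / Real.Gamma (α * (k+1:ℕ) + 1)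
      ≤ ((α * k) ^ α / 2 * |x| ^ k) / (Real.Gamma (α * k + 1) * (α * k) ^ α) := by
        apply div_le_div₀ (by positivity) ?_ (by positivity) hkey
        rw [pow_succ, mul_comm (|x|^k) |x|]
        apply mul_le_mul_of_nonneg_right (by linarith) (by positivity)
    _ = 1/2 * (|x| ^ k / Real.Gamma (α * k + 1)) := by
        field_simp

lemma ml_zero {α : ℝ} : mittagLeffler α 1 0 = 1 := by
  unfold mittagLeffler
  rw [tsum_eq_single 0 (fun k hk => by simp [zero_pow hk])]
  norm_num [Real.Gamma_one]

lemma ml_le {α : ℝ} (hα : 0 < α) (hα1 : α < 1) {x c : ℝ} (h : |x| ≤ c) :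
    |mittagLeffler α 1 x| ≤ mittagLeffler α 1 c := by
  unfold mittagLeffler
  have habs : ∀ y : ℝ, ∀ k : ℕ, |y ^ k / Real.Gamma (α * k + 1)|
      = |y| ^ k / Real.Gamma (α * k + 1) := by
    intro y k
    rw [abs_div, abs_pow, abs_of_pos (Real.Gamma_pos_of_pos (by positivity))]
  calc |∑' k : ℕ, x ^ k / Real.Gamma (α * k + 1)|
      ≤ ∑' k : ℕ, |x ^ k / Real.Gamma (α * k + 1)| := by
        simpa only [Real.norm_eq_abs] using norm_tsum_le_tsum_norm (f := fun k : ℕ => x ^ k / Real.Gamma (α * k + 1)) (by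
          apply Summable.congr (ml_summable hα hα1 |x|)
          intro k; rw [Real.norm_eq_abs, habs])
    _ ≤ ∑' k : ℕ, c ^ k / Real.Gamma (α * k + 1) := by
        apply Summable.tsum_le_tsum ?_ ?_ (ml_summable hα hα1 c)
        · intro k
          rw [habs]
          gcongr
        · apply Summable.congr (ml_summable hα hα1 |x|)
          intro k; rw [habs]

lemma ml_cont {α : ℝ} (hα : 0 < α) (hα1 : α < 1) : Continuous (mittagLeffler α 1) := by
  rw [continuous_iff_continuousAt]
  intro x
  set R := |x| + 1 with hR
  have hR0 : 0 < R := by positivity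
  have hc : ContinuousOn (mittagLeffler α 1) (Icc (-R) R) := by
    unfold mittagLeffler
    apply continuousOn_tsum (f := fun (k : ℕ) (y : ℝ) => y ^ k / Real.Gamma (α * k + 1)) (u := fun k : ℕ => R ^ k / Real.Gamma (α * k + 1))
      (fun (k : ℕ) => ((continuous_pow k).div_const _).continuousOn) (ml_summable hα hα1 R)
    intro k y hy
    rw [Real.norm_eq_abs, abs_div, abs_pow, abs_of_pos (Real.Gamma_pos_of_pos (by positivity))]
    gcongr
    exact abs_le.2 ⟨hy.1, hy.2⟩
  apply hc.continuousAt (Icc_mem_nhds ?_ ?_)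
  · linarith [neg_abs_le x]
  · linarith [le_abs_self x]

lemma beta_integrable {a b u : ℝ} (ha : 0 < a) (hb : 0 ≤ b) :
    IntervalIntegrable (fun v => (u - v) ^ (a - 1) * v ^ b) volume 0 u := by
  have h1 : IntervalIntegrable (fun w : ℝ => w ^ (a - 1)) volume 0 u :=
    intervalIntegrable_rpow' (by linarith)
  have h2 : IntervalIntegrable (fun v : ℝ => (u - v) ^ (a - 1)) volume 0 u := by
    have := (h1.comp_sub_left u).symm
    simpa using this
  exact h2.mul_continuousOn (Real.continuous_rpow_const hb).continuousOn

lemma beta_eval {a b u : ℝ} (ha : 0 < a) (hb : 0 ≤ b) (hu : 0 < u) :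
    ∫ v in (0:ℝ)..u, (u - v) ^ (a - 1) * v ^ b =
      Real.Gamma a * Real.Gamma (b + 1) / Real.Gamma (a + b + 1) * u ^ (a + b) := by
  have h0u : (0:ℝ) ≤ u := hu.le
  have hcast : ((∫ v in (0:ℝ)..u, (u - v) ^ (a - 1) * v ^ b : ℝ) : ℂ)
      = ∫ v in (0:ℝ)..u, (v:ℂ) ^ ((b:ℂ) + 1 - 1) * ((u:ℂ) - (v:ℂ)) ^ ((a:ℂ) - 1) := by
    rw [← intervalIntegral.integral_ofReal]
    apply intervalIntegral.integral_congr
    intro v hv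
    rw [Set.uIcc_of_le h0u] at hv
    have hv0 : 0 ≤ v := hv.1
    have huv : 0 ≤ u - v := by linarith [hv.2]
    push_cast
    rw [Complex.ofReal_cpow huv, Complex.ofReal_cpow hv0]
    push_cast
    rw [show (b:ℂ) + 1 - 1 = (b:ℂ) by ring]
    ring
  have hscaled := Complex.betaIntegral_scaled ((b:ℂ) + 1) (a:ℂ) hu
  have hbeta := Complex.Gamma_mul_Gamma_eq_betaIntegral (s := (b:ℂ) + 1) (t := (a:ℂ))
    (by simp; linarith) (by simpa using ha)
  have hne : Complex.Gamma ((b:ℂ) + 1 + (a:ℂ)) ≠ 0 :=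
    Complex.Gamma_ne_zero_of_re_pos (by simp; linarith)
  have hbi : Complex.betaIntegral ((b:ℂ) + 1) (a:ℂ)
      = Complex.Gamma ((b:ℂ) + 1) * Complex.Gamma (a:ℂ) / Complex.Gamma ((b:ℂ) + 1 + (a:ℂ)) := by
    rw [eq_div_iff hne]
    linear_combination -hbeta
  apply Complex.ofReal_injective
  rw [hcast, hscaled, hbi]
  rw [Complex.ofReal_mul, Complex.ofReal_div, Complex.ofReal_mul,
    ← Complex.Gamma_ofReal, ← Complex.Gamma_ofReal, ← Complex.Gamma_ofReal,
    Complex.ofReal_cpow h0u]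
  push_cast
  rw [show (b:ℂ) + 1 + (a:ℂ) - 1 = (a:ℂ) + (b:ℂ) by ring,
    show (b:ℂ) + 1 + (a:ℂ) = (a:ℂ) + (b:ℂ) + 1 by ring]
  ring

lemma key_identity {α : ℝ} (hα : 0 < α) (hα1 : α < 1) {u : ℝ} (hu : 0 ≤ u) :
    α / (1 - α) / Real.Gamma α *
        ∫ w in (0:ℝ)..u, (u - w) ^ (α - 1) * mittagLeffler α 1 (-(α / (1 - α)) * w ^ α)
      = 1 - mittagLeffler α 1 (-(α / (1 - α)) * u ^ α) := by
  have h1α : (0:ℝ) < 1 - α := by linarith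
  set γ := α / (1 - α) with hγdef
  have hγ0 : 0 < γ := div_pos hα h1α
  have hΓα : 0 < Real.Gamma α := Real.Gamma_pos_of_pos hα
  rcases hu.eq_or_lt with h | h
  · simp [← h, Real.zero_rpow (ne_of_gt hα), ml_zero]
  -- now 0 < u
  set c : ℕ → ℝ := fun k => (-γ) ^ k / Real.Gamma (α * k + 1) with hc
  set F : ℕ → ℝ → ℝ := fun k w => c k * ((u - w) ^ (α - 1) * w ^ (α * k)) with hF
  have hΓk : ∀ k : ℕ, (0:ℝ) < Real.Gamma (α * k + 1) :=
    fun k => Real.Gamma_pos_of_pos (by positivity)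
  have hΓk' : ∀ k : ℕ, (0:ℝ) < Real.Gamma (α + α * k + 1) :=
    fun k => Real.Gamma_pos_of_pos (by positivity)
  have harg : ∀ k : ℕ, α * ((k + 1 : ℕ) : ℝ) + 1 = α + α * k + 1 := by
    intro k; push_cast; ring
  have hioc : ∀ w ∈ Ioc (0:ℝ) u, (u - w) ^ (α - 1) * mittagLeffler α 1 (-γ * w ^ α)
      = ∑' k : ℕ, F k w := by
    intro w hw
    unfold mittagLeffler
    rw [← tsum_mul_left]
    apply tsum_congr
    intro k
    have hwpow : (-γ * w ^ α) ^ k = (-γ) ^ k * w ^ (α * k) := by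
      rw [mul_pow, ← Real.rpow_natCast (w ^ α) k, ← Real.rpow_mul hw.1.le]
    rw [hF, hc, hwpow]
    ring
  have hset : (∫ w in (0:ℝ)..u, (u - w) ^ (α - 1) * mittagLeffler α 1 (-γ * w ^ α))
      = ∫ w in Ioc (0:ℝ) u, ∑' k : ℕ, F k w := by
    rw [intervalIntegral.integral_of_le hu]
    exact setIntegral_congr_fun measurableSet_Ioc hioc
  have hbk : ∀ k : ℕ, (∫ w in Ioc (0:ℝ) u, (u - w) ^ (α - 1) * w ^ (α * k))
      = Real.Gamma α * Real.Gamma (α * k + 1) / Real.Gamma (α + α * k + 1) * u ^ (α + α * k) := by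
    intro k
    rw [← intervalIntegral.integral_of_le hu, beta_eval hα (by positivity) h]
  have hintk : ∀ k : ℕ, IntegrableOn (F k) (Ioc 0 u) := by
    intro k
    rw [hF, ← intervalIntegrable_iff_integrableOn_Ioc_of_le hu]
    exact (beta_integrable hα (by positivity)).const_mul _
  have hterm : ∀ k : ℕ, (∫ w in Ioc (0:ℝ) u, F k w)
      = c k * (Real.Gamma α * Real.Gamma (α * k + 1) / Real.Gamma (α + α * k + 1)
          * u ^ (α + α * k)) := by
    intro k
    rw [hF, MeasureTheory.integral_const_mul, hbk]
  have hupow : ∀ k : ℕ, (u ^ α) ^ (k + 1) = u ^ (α + α * k) := by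
    intro k
    rw [← Real.rpow_natCast (u ^ α) (k + 1), ← Real.rpow_mul hu]
    congr 1
    push_cast; ring
  have hmeas : ∀ k : ℕ, AEStronglyMeasurable (F k) (volume.restrict (Ioc 0 u)) := by
    intro k
    exact ((((measurable_const.sub measurable_id).pow_const _).mul
      (measurable_id.pow_const _)).const_mul _).aestronglyMeasurable
  have hsum2 : Summable (fun k : ℕ => (γ * u ^ α) ^ (k + 1) / Real.Gamma (α * ((k+1:ℕ):ℝ) + 1)) := by
    have := (summable_nat_add_iff (f := fun k : ℕ => (γ * u ^ α) ^ k / Real.Gamma (α * k + 1)) 1).2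
      (ml_summable hα hα1 (γ * u ^ α))
    exact this
  have hnormval : ∀ k : ℕ, (∫ w in Ioc (0:ℝ) u, ‖F k w‖)
      = (Real.Gamma α / γ) * ((γ * u ^ α) ^ (k + 1) / Real.Gamma (α * ((k+1:ℕ):ℝ) + 1)) := by
    intro k
    have habs : ∀ w ∈ Ioc (0:ℝ) u, ‖F k w‖ = |c k| * ((u - w) ^ (α - 1) * w ^ (α * k)) := by
      intro w hw
      rw [hF, Real.norm_eq_abs, abs_mul]
      congr 1
      have h1 : (0:ℝ) ≤ (u - w) ^ (α - 1) := Real.rpow_nonneg (by linarith [hw.2]) _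
      have h2 : (0:ℝ) ≤ w ^ (α * k) := Real.rpow_nonneg hw.1.le _
      rw [abs_of_nonneg (mul_nonneg h1 h2)]
    rw [setIntegral_congr_fun measurableSet_Ioc habs, MeasureTheory.integral_const_mul, hbk]
    have habsc : |c k| = γ ^ k / Real.Gamma (α * k + 1) := by
      rw [hc, abs_div, abs_pow, abs_neg, abs_of_pos hγ0, abs_of_pos (hΓk k)]
    rw [habsc, harg, mul_pow, hupow]
    field_simp
    ring
  have hlint : ∑' k : ℕ, (∫⁻ w in Ioc (0:ℝ) u, ‖F k w‖₊) ≠ ⊤ := by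
    have heq : ∀ k : ℕ, (∫⁻ w in Ioc (0:ℝ) u, ‖F k w‖₊)
        = ENNReal.ofReal ((Real.Gamma α / γ) *
            ((γ * u ^ α) ^ (k + 1) / Real.Gamma (α * ((k+1:ℕ):ℝ) + 1))) := by
      intro k
      rw [← hnormval k]
      exact (ofReal_integral_norm_eq_lintegral_enorm (hintk k)).symm
    rw [funext heq, ← ENNReal.ofReal_tsum_of_nonneg]
    · exact ENNReal.ofReal_ne_top
    · intro k
      have : (0:ℝ) < Real.Gamma (α * ((k+1:ℕ):ℝ) + 1) := by rw [harg]; exact hΓk' k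
      positivity
    · exact hsum2.mul_left _
  have hswap := MeasureTheory.integral_tsum hmeas hlint
  rw [hset, hswap]
  have htermfin : ∀ k : ℕ, γ / Real.Gamma α * (∫ w in Ioc (0:ℝ) u, F k w)
      = -((-γ * u ^ α) ^ (k + 1) / Real.Gamma (α * ((k+1:ℕ):ℝ) + 1)) := by
    intro k
    rw [hterm, hc, harg, mul_pow, hupow]
    have h1 := hΓk k
    have h2 := hΓk' k
    field_simp
    ring
  calc γ / Real.Gamma α * ∑' k : ℕ, (∫ w in Ioc (0:ℝ) u, F k w)
      = ∑' k : ℕ, γ / Real.Gamma α * (∫ w in Ioc (0:ℝ) u, F k w) := by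
        rw [tsum_mul_left]
    _ = ∑' k : ℕ, -((-γ * u ^ α) ^ (k + 1) / Real.Gamma (α * ((k+1:ℕ):ℝ) + 1)) := by
        exact tsum_congr htermfin
    _ = -∑' k : ℕ, (-γ * u ^ α) ^ (k + 1) / Real.Gamma (α * ((k+1:ℕ):ℝ) + 1) := by
        rw [tsum_neg]
    _ = 1 - mittagLeffler α 1 (-γ * u ^ α) := by
        have hg : Summable (fun k : ℕ => (-γ * u ^ α) ^ k / Real.Gamma (α * k + 1)) :=
          ml_summable hα hα1 _
        have hzero := hg.tsum_eq_zero_add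
        have hg0 : (-γ * u ^ α) ^ (0:ℕ) / Real.Gamma (α * (0:ℕ) + 1) = 1 := by
          norm_num [Real.Gamma_one]
        unfold mittagLeffler
        rw [hzero, hg0]
        push_cast
        ring

theorem stmt5 (α T : ℝ) (hα : α ∈ Set.Ioo (0 : ℝ) 1) (hT : 0 < T)
    (f : ℝ → ℝ) (hf : ContDiffOn ℝ 1 f (Set.Icc 0 T))
    (t : ℝ) (ht : t ∈ Set.Icc 0 T) :
    ABint α (ABCderiv α f) t = f t - f 0 := by
  obtain ⟨hα0, hα1⟩ := hα
  obtain ⟨ht0, htT⟩ := ht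
  have h1α : (0:ℝ) < 1 - α := by linarith
  have hΓα : 0 < Real.Gamma α := Real.Gamma_pos_of_pos hα0
  have hB : 0 < Bnorm α := by
    have h2 : 0 < α / Real.Gamma α := div_pos hα0 hΓα
    unfold Bnorm; linarith
  rcases ht0.eq_or_lt with h0t | h0t
  · simp [ABint, ABCderiv, ← h0t]
  -- 0 < t
  set E : ℝ → ℝ := fun v => mittagLeffler α 1 (-(α / (1 - α)) * v ^ α) with hE
  have hEdef : ∀ v, mittagLeffler α 1 (-(α / (1 - α)) * v ^ α) = E v := fun v => rfl
  have hEcont : Continuous E := by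
    rw [hE]
    exact (ml_cont hα0 hα1).comp (continuous_const.mul (Real.continuous_rpow_const hα0.le))
  set M : ℝ := mittagLeffler α 1 (α / (1 - α) * T ^ α) with hM0
  have hγ0 : 0 < α / (1 - α) := div_pos hα0 h1α
  have hM : ∀ v : ℝ, 0 ≤ v → v ≤ T → |E v| ≤ M := by
    intro v h0 h1
    apply ml_le hα0 hα1
    have habs : |(-(α / (1 - α))) * v ^ α| = α / (1 - α) * v ^ α := by
      rw [abs_mul, abs_neg, abs_of_pos hγ0, abs_of_nonneg (Real.rpow_nonneg h0 α)]
    rw [habs]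
    exact mul_le_mul_of_nonneg_left (Real.rpow_le_rpow h0 h1 hα0.le) hγ0.le
  have hMnn : 0 ≤ M := (abs_nonneg _).trans (by
    have := hM 0 le_rfl hT.le
    exact this)
  -- bound for deriv f
  have hdWcont : ContinuousOn (derivWithin f (Icc 0 T)) (Icc 0 T) :=
    hf.continuousOn_derivWithin (uniqueDiffOn_Icc hT) le_rfl
  obtain ⟨M₁, hM₁⟩ := isCompact_Icc.exists_bound_of_continuousOn hdWcont
  have hM₁0 : 0 ≤ M₁ := le_trans (norm_nonneg _) (hM₁ 0 ⟨le_rfl, hT.le⟩)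
  set C : ℝ := M₁ + |deriv f t| with hCdef
  have hC0 : 0 ≤ C := by positivity
  have hC : ∀ y ∈ Ioc (0:ℝ) t, |deriv f y| ≤ C := by
    intro y hy
    rcases hy.2.lt_or_eq with hyt | hyt
    · have hyT : y ∈ Ioo (0:ℝ) T := ⟨hy.1, lt_of_lt_of_le hyt htT⟩
      have : deriv f y = derivWithin f (Icc 0 T) y :=
        (derivWithin_of_mem_nhds (Icc_mem_nhds hyT.1 hyT.2)).symm
      rw [this]
      have := hM₁ y ⟨hyT.1.le, hyT.2.le⟩
      rw [Real.norm_eq_abs] at this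
      have : |derivWithin f (Icc 0 T) y| ≤ M₁ := this
      have h4 : (0:ℝ) ≤ |deriv f t| := abs_nonneg _
      rw [hCdef]; linarith
    · rw [hyt, hCdef]; linarith
  have hFmeas : Measurable (deriv f) := measurable_deriv f
  -- integrability facts
  have hFE_meas : AEStronglyMeasurable (fun y => deriv f y * E (t - y))
      (volume.restrict (Ioc (0:ℝ) t)) :=
    (hFmeas.mul ((hEcont.comp (continuous_const.sub continuous_id)).measurable)).aestronglyMeasurable
  have hFE_bound : ∀ y ∈ Ioc (0:ℝ) t, ‖deriv f y * E (t - y)‖ ≤ C * M := by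
    intro y hy
    rw [Real.norm_eq_abs, abs_mul]
    apply mul_le_mul (hC y hy) (hM (t - y) (by linarith [hy.2]) (by linarith [hy.1])) (abs_nonneg _) hC0
  have hconst_int : ∀ c : ℝ, IntegrableOn (fun _ : ℝ => c) (Ioc (0:ℝ) t) volume :=
    fun c => integrableOn_const measure_Ioc_lt_top.ne
  have hFE_int : IntegrableOn (fun y => deriv f y * E (t - y)) (Ioc (0:ℝ) t) volume := by
    apply Integrable.mono' (hconst_int (C * M)) hFE_meas
    rw [ae_restrict_iff' measurableSet_Ioc]
    exact ae_of_all _ hFE_bound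
  have hF_int : IntegrableOn (deriv f) (Ioc (0:ℝ) t) volume := by
    apply Integrable.mono' (hconst_int C) hFmeas.aestronglyMeasurable
    rw [ae_restrict_iff' measurableSet_Ioc]
    exact ae_of_all _ (fun y hy => by rw [Real.norm_eq_abs]; exact hC y hy)
  -- FTC
  have hFTC : (∫ y in (0:ℝ)..t, deriv f y) = f t - f 0 := by
    apply intervalIntegral.integral_eq_sub_of_hasDerivAt_of_le h0t.le
      (hf.continuousOn.mono (Icc_subset_Icc le_rfl htT))
    · intro y hy
      have hyT : y ∈ Ioo (0:ℝ) T := ⟨hy.1, lt_of_lt_of_le hy.2 htT⟩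
      exact ((hf.differentiableOn one_ne_zero y ⟨hyT.1.le, hyT.2.le⟩).differentiableAt
        (Icc_mem_nhds hyT.1 hyT.2)).hasDerivAt
    · exact (intervalIntegrable_iff_integrableOn_Ioc_of_le h0t.le).2 hF_int
  -- the convolution kernel double integral
  set J : ℝ → ℝ := fun s => ∫ y in (0:ℝ)..s, deriv f y * E (s - y) with hJ
  have hD : ∀ s, ABCderiv α f s = Bnorm α / (1 - α) * J s := fun s => rfl
  set G : ℝ × ℝ → ℝ := Set.indicator {q : ℝ × ℝ | q.2 ≤ q.1}
    (fun q => (t - q.1) ^ (α - 1) * (deriv f q.2 * E (q.1 - q.2))) with hG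
  have hGmeas : Measurable G := by
    rw [hG]
    apply Measurable.indicator
    · exact ((measurable_const.sub measurable_fst).pow_const _).mul
        ((hFmeas.comp measurable_snd).mul
          (hEcont.measurable.comp (measurable_fst.sub measurable_snd)))
    · exact measurableSet_le measurable_snd measurable_fst
  have hrpow_int : IntegrableOn (fun s : ℝ => (t - s) ^ (α - 1) * (C * M)) (Ioc (0:ℝ) t)
      volume := by
    rw [← intervalIntegrable_iff_integrableOn_Ioc_of_le h0t.le]
    have h1 : IntervalIntegrable (fun w : ℝ => w ^ (α - 1)) volume 0 t :=
      intervalIntegrable_rpow' (by linarith)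
    have h2 : IntervalIntegrable (fun s : ℝ => (t - s) ^ (α - 1)) volume 0 t := by
      have := (h1.comp_sub_left t).symm
      simpa using this
    exact h2.mul_const _
  have hG_int : Integrable G
      ((volume.restrict (Ioc (0:ℝ) t)).prod (volume.restrict (Ioc (0:ℝ) t))) := by
    apply Integrable.mono' (g := fun p : ℝ × ℝ => (t - p.1) ^ (α - 1) * (C * M))
    · have := hrpow_int.mul_prod (hconst_int 1)
      simpa using this
    · exact hGmeas.aestronglyMeasurable
    · rw [Measure.prod_restrict, ae_restrict_iff' (measurableSet_Ioc.prod measurableSet_Ioc)]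
      apply ae_of_all
      rintro ⟨s, y⟩ hp
      obtain ⟨hs, hy⟩ := hp
      simp only [mem_Ioc] at hs hy
      by_cases hle : y ≤ s
      · rw [hG, Set.indicator_of_mem (by exact hle)]
        rw [Real.norm_eq_abs, abs_mul, abs_of_nonneg (Real.rpow_nonneg (by linarith [hs.2]) _)]
        apply mul_le_mul_of_nonneg_left _ (Real.rpow_nonneg (by linarith [hs.2]) _)
        rw [abs_mul]
        apply mul_le_mul (hC y ⟨hy.1, le_trans hle hs.2⟩)
          (hM (s - y) (by linarith) (by linarith [hs.2, hy.1])) (abs_nonneg _) hC0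
      · rw [hG, Set.indicator_of_notMem (by exact hle)]
        simp only [norm_zero]
        exact mul_nonneg (Real.rpow_nonneg (by linarith [hs.2]) _) (mul_nonneg hC0 hMnn)
  -- step 1 : interval double integral to set double integral
  have step1 : (∫ s in (0:ℝ)..t, J s * (t - s) ^ (α - 1))
      = ∫ s in Ioc (0:ℝ) t, ∫ y in Ioc (0:ℝ) t, G (s, y) := by
    rw [intervalIntegral.integral_of_le h0t.le]
    apply setIntegral_congr_fun measurableSet_Ioc
    intro s hs
    show J s * (t - s) ^ (α - 1) = ∫ y in Ioc (0:ℝ) t, G (s, y)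
    have h1 : (fun y => G (s, y))
        = fun y => (Iic s).indicator
            (fun y' => (t - s) ^ (α - 1) * (deriv f y' * E (s - y'))) y := by
      funext y
      simp [hG, Set.indicator_apply, Set.mem_setOf_eq, Set.mem_Iic]
    rw [h1, setIntegral_indicator measurableSet_Iic]
    have h2 : Ioc (0:ℝ) t ∩ Iic s = Ioc 0 s := by
      ext y
      simp only [mem_inter_iff, mem_Ioc, mem_Iic]
      constructor
      · rintro ⟨⟨h3, _⟩, h5⟩; exact ⟨h3, h5⟩
      · rintro ⟨h3, h5⟩; exact ⟨⟨h3, le_trans h5 hs.2⟩, h5⟩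
    rw [h2, MeasureTheory.integral_const_mul]
    have h3 : J s = ∫ y in Ioc (0:ℝ) s, deriv f y * E (s - y) :=
      intervalIntegral.integral_of_le hs.1.le
    rw [h3]
    ring
  -- step 2 : Fubini
  have step2 : (∫ s in Ioc (0:ℝ) t, ∫ y in Ioc (0:ℝ) t, G (s, y))
      = ∫ y in Ioc (0:ℝ) t, ∫ s in Ioc (0:ℝ) t, G (s, y) :=
    MeasureTheory.integral_integral_swap hG_int
  -- step 3 : evaluate inner integral
  have step3 : ∀ y ∈ Ioc (0:ℝ) t, (∫ s in Ioc (0:ℝ) t, G (s, y))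
      = deriv f y * ∫ w in (0:ℝ)..(t - y), ((t - y) - w) ^ (α - 1) * E w := by
    intro y hy
    have h1 : (fun s => G (s, y))
        = fun s => (Ici y).indicator
            (fun s' => (t - s') ^ (α - 1) * (deriv f y * E (s' - y))) s := by
      funext s
      simp [hG, Set.indicator_apply, Set.mem_setOf_eq, Set.mem_Ici]
    rw [h1, setIntegral_indicator measurableSet_Ici]
    have h2 : Ioc (0:ℝ) t ∩ Ici y = Icc y t := by
      ext s
      simp only [mem_inter_iff, mem_Ioc, mem_Icc, mem_Ici]
      constructor
      · rintro ⟨⟨_, h4⟩, h5⟩; exact ⟨h5, h4⟩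
      · rintro ⟨h5, h4⟩; exact ⟨⟨lt_of_lt_of_le hy.1 h5, h4⟩, h5⟩
    rw [h2, MeasureTheory.integral_Icc_eq_integral_Ioc, ← intervalIntegral.integral_of_le hy.2]
    have h3 : (fun s => (t - s) ^ (α - 1) * (deriv f y * E (s - y)))
        = fun s => deriv f y * (((t - y) - (s - y)) ^ (α - 1) * E (s - y)) := by
      funext s
      rw [show (t - y) - (s - y) = t - s by ring]
      ring
    rw [h3, intervalIntegral.integral_const_mul]
    congr 1
    have h4 := intervalIntegral.integral_comp_sub_right
      (fun w => ((t - y) - w) ^ (α - 1) * E w) y (a := y) (b := t)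
    rw [sub_self] at h4
    exact h4
  -- step 4 : key identity
  have step4 : ∀ y ∈ Ioc (0:ℝ) t,
      α / (1 - α) / Real.Gamma α *
        (deriv f y * ∫ w in (0:ℝ)..(t - y), ((t - y) - w) ^ (α - 1) * E w)
      = deriv f y * (1 - E (t - y)) := by
    intro y hy
    have hkey := key_identity hα0 hα1 (sub_nonneg.2 hy.2)
    simp only [hEdef] at hkey
    calc α / (1 - α) / Real.Gamma α *
          (deriv f y * ∫ w in (0:ℝ)..(t - y), ((t - y) - w) ^ (α - 1) * E w)
        = deriv f y * (α / (1 - α) / Real.Gamma α *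
            ∫ w in (0:ℝ)..(t - y), ((t - y) - w) ^ (α - 1) * E w) := by ring
      _ = deriv f y * (1 - E (t - y)) := by rw [hkey]
  -- assemble
  unfold ABint
  simp only [hD]
  have e2 : (fun s => Bnorm α / (1 - α) * J s * (t - s) ^ (α - 1))
      = fun s => (Bnorm α / (1 - α)) * (J s * (t - s) ^ (α - 1)) := by
    funext s; ring
  calc (1 - α) / Bnorm α * (Bnorm α / (1 - α) * J t) +
        α / (Bnorm α * Real.Gamma α) *
          ∫ s in (0:ℝ)..t, Bnorm α / (1 - α) * J s * (t - s) ^ (α - 1)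
      = J t + α / (1 - α) / Real.Gamma α * ∫ s in (0:ℝ)..t, J s * (t - s) ^ (α - 1) := by
        rw [e2, intervalIntegral.integral_const_mul]
        field_simp
    _ = J t + α / (1 - α) / Real.Gamma α * ∫ y in Ioc (0:ℝ) t,
          deriv f y * ∫ w in (0:ℝ)..(t - y), ((t - y) - w) ^ (α - 1) * E w := by
        rw [step1, step2, setIntegral_congr_fun measurableSet_Ioc step3]
    _ = J t + ∫ y in Ioc (0:ℝ) t, deriv f y * (1 - E (t - y)) := by
        rw [← MeasureTheory.integral_const_mul]
        congr 1
        exact setIntegral_congr_fun measurableSet_Ioc step4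
    _ = J t + ((∫ y in Ioc (0:ℝ) t, deriv f y)
          - ∫ y in Ioc (0:ℝ) t, deriv f y * E (t - y)) := by
        congr 1
        rw [← MeasureTheory.integral_sub hF_int hFE_int]
        apply MeasureTheory.integral_congr_ae (ae_of_all _ (fun y => by ring))
    _ = f t - f 0 := by
        have hJt : J t = ∫ y in Ioc (0:ℝ) t, deriv f y * E (t - y) := by
          rw [hJ]
          exact intervalIntegral.integral_of_le h0t.le
        rw [intervalIntegral.integral_of_le h0t.le] at hFTC
        rw [hJt, hFTC]
        ring
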